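/- Let g : ℝ → ℝ be the step function with g(x) = −1 for x < 0 and g(x) = 0 for x > 0 (the value at 0 is irrelevant), and for each natural number p define the truncated Legendre expansion ĝ^p(x) = −1/2 + Σ_{n=0}^{p} [(−1)^n (4n+3)(2n)! / (2^{2n+2} (n+1)! n!)] · P_{2n+1}(x). Then ĝ^p converges to g in L² on [−1,1]: the integrals ∫_{−1}^{1} (g(x) − ĝ^p(x))² dx tend to 0 as p → ∞. -/

import Mathlib

open Polynomial intervalIntegral Filter

/-- The Legendre polynomial `P_m` defined by Rodrigues' formula. -/
noncomputable def legendre (m : ℕ) : Polynomial ℝ :=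
  Polynomial.C ((1 : ℝ) / (2 ^ m * (Nat.factorial m))) *
    Polynomial.derivative^[m] ((Polynomial.X ^ 2 - 1) ^ m)

/-- The truncated Legendre expansion `ĝ^p` of the step function. -/
noncomputable def stepExpansion (p : ℕ) (x : ℝ) : ℝ :=
  -1 / 2 + ∑ n ∈ Finset.range (p + 1),
    ((-1 : ℝ) ^ n * (4 * (n : ℝ) + 3) * (Nat.factorial (2 * n))
        / (2 ^ (2 * n + 2) * (Nat.factorial (n + 1)) * (Nat.factorial n)))
      * (legendre (2 * n + 1)).eval x

open Finset Nat

/-! The `ĝ^p` are the partial sums of the Fourier–Legendre series of `g`. Rodrigues' formula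
and repeated integration by parts give orthogonality of the `P_m` on `[-1, 1]`,
`∫ P_m² = 2/(2m+1)` and `∫_{-1}^0 P_{2n+1} = (-1)^(n+1) b_n / (2(n+1))`, where
`b_n = C(2n, n) / 4^n`. Since `∫ (g - ĝ^p)² = 1 + 2 ∫_{-1}^0 ĝ^p + ∫ (ĝ^p)²` and both
integrals are sums of the same telescoping terms `(b_n² - b_{n+1}²) / 2`, the error equals
`b_{p+1}² / 2 ≤ 1 / (2(2p+3))`. -/

theorem integral_eval_derivative (r : ℝ[X]) (a b : ℝ) :
    ∫ x in a..b, (derivative r).eval x = r.eval b - r.eval a :=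
  integral_eq_sub_of_hasDerivAt (fun x _ => r.hasDerivAt x)
    ((derivative r).continuous.intervalIntegrable a b)

theorem integral_eval_mul_eval_derivative {a b : ℝ} (u v : ℝ[X]) (ha : v.eval a = 0)
    (hb : v.eval b = 0) :
    ∫ x in a..b, u.eval x * (derivative v).eval x
      = -∫ x in a..b, (derivative u).eval x * v.eval x := by
  rw [integral_mul_deriv_eq_deriv_mul (fun x _ => u.hasDerivAt x) (fun x _ => v.hasDerivAt x)
    ((derivative u).continuous.intervalIntegrable a b)
    ((derivative v).continuous.intervalIntegrable a b), ha, hb]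
  ring

theorem iterate_derivative_natDegree {R : Type*} [Semiring R] (p : R[X]) :
    derivative^[p.natDegree] p = C ((p.natDegree ! : R) * p.leadingCoeff) := by
  rw [eq_C_of_natDegree_le_zero ((natDegree_iterate_derivative p _).trans (by omega)),
    coeff_iterate_derivative, zero_add, descFactorial_self, nsmul_eq_mul, leadingCoeff]

section XSqSubOne

variable {R : Type*} [CommRing R]

theorem monic_X_sq_sub_one : (X ^ 2 - 1 : R[X]).Monic := by
  simpa using monic_X_pow_sub_C (1 : R) two_ne_zero

theorem natDegree_X_sq_sub_one_pow [Nontrivial R] (m : ℕ) :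
    ((X ^ 2 - 1 : R[X]) ^ m).natDegree = 2 * m := by
  have h : (X ^ 2 - 1 : R[X]).natDegree = 2 := by
    simpa using natDegree_X_pow_sub_C (n := 2) (r := (1 : R))
  rw [monic_X_sq_sub_one.natDegree_pow, h, mul_comm]

theorem coeff_X_sq_sub_one_pow (m k : ℕ) :
    ((X ^ 2 - 1 : R[X]) ^ m).coeff (2 * k) = (-1) ^ (m - k) * m.choose k := by
  have h : (X ^ 2 - 1 : R[X]) ^ m = expand R 2 ((X + C (-1)) ^ m) := by
    simp [sub_eq_add_neg]
  rw [h, coeff_expand two_pos, if_pos (dvd_mul_right 2 k), mul_div_cancel_left₀ k two_ne_zero,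
    coeff_X_add_C_pow]

theorem eval_iterate_derivative_X_sq_sub_one_pow {m k : ℕ} (hk : k < m) {e : R}
    (he : e ^ 2 = 1) : (derivative^[k] ((X ^ 2 - 1 : R[X]) ^ m)).eval e = 0 := by
  have h := eval_dvd (x := e) (pow_sub_dvd_iterate_derivative_pow (X ^ 2 - 1 : R[X]) m k)
  rwa [eval_pow, eval_sub, eval_pow, eval_X, eval_one, he, sub_self, zero_pow (by omega),
    zero_dvd_iff] at h

end XSqSubOne

theorem integral_eval_mul_iterate_derivative_X_sq_sub_one_pow (u : ℝ[X]) (m : ℕ) :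
    ∫ x in (-1 : ℝ)..1, u.eval x * (derivative^[m] ((X ^ 2 - 1 : ℝ[X]) ^ m)).eval x
      = (-1) ^ m * ∫ x in (-1 : ℝ)..1, (derivative^[m] u).eval x * (x ^ 2 - 1) ^ m := by
  suffices h : ∀ j ≤ m,
      ∫ x in (-1 : ℝ)..1, u.eval x * (derivative^[m] ((X ^ 2 - 1) ^ m)).eval x
        = (-1) ^ j * ∫ x in (-1 : ℝ)..1,
            (derivative^[j] u).eval x * (derivative^[m - j] ((X ^ 2 - 1 : ℝ[X]) ^ m)).eval x by
    simpa using h m le_rfl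
  intro j hj
  induction j with
  | zero => simp
  | succ j ih =>
    rw [ih (by omega), show m - j = m - (j + 1) + 1 by omega, Function.iterate_succ_apply',
      integral_eval_mul_eval_derivative _ _
        (eval_iterate_derivative_X_sq_sub_one_pow (by omega) (by norm_num))
        (eval_iterate_derivative_X_sq_sub_one_pow (by omega) (one_pow 2)),
      ← Function.iterate_succ_apply' derivative, pow_succ]
    ring

theorem integral_X_sq_sub_one_pow_succ (n : ℕ) :
    ∫ x in (-1 : ℝ)..1, (x ^ 2 - 1) ^ (n + 1)
      = -(2 * (n + 1)) / (2 * n + 3 : ℝ) * ∫ x in (-1 : ℝ)..1, (x ^ 2 - 1) ^ n := by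
  have ibp := integral_eval_mul_eval_derivative (a := -1) (b := 1) X ((X ^ 2 - 1) ^ (n + 1))
    (by simp) (by simp)
  have integrand : ∀ x : ℝ, x * (derivative ((X ^ 2 - 1 : ℝ[X]) ^ (n + 1))).eval x
      = (2 * (n + 1)) * (x ^ 2 - 1) ^ (n + 1) + (2 * (n + 1)) * (x ^ 2 - 1) ^ n := by
    intro x
    simp only [derivative_pow, derivative_sub, derivative_X, derivative_one, eval_mul,
      eval_pow, eval_sub, eval_X, eval_one, eval_zero, eval_C]
    push_cast
    ring
  simp only [derivative_X, eval_one, one_mul, eval_pow, eval_sub, eval_X, integrand] at ibp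
  rw [integral_add (Continuous.intervalIntegrable (by fun_prop) _ _)
    (Continuous.intervalIntegrable (by fun_prop) _ _), integral_const_mul,
    integral_const_mul] at ibp
  field_simp
  linarith

theorem integral_X_sq_sub_one_pow (n : ℕ) :
    ∫ x in (-1 : ℝ)..1, (x ^ 2 - 1) ^ n
      = (-1) ^ n * 2 ^ (2 * n + 1) * (n ! : ℝ) ^ 2 / (2 * n + 1)! := by
  induction n with
  | zero => norm_num
  | succ n ih =>
    rw [integral_X_sq_sub_one_pow_succ, ih, show 2 * (n + 1) + 1 = 2 * n + 1 + 1 + 1 by ring,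
      factorial_succ (2 * n + 1 + 1), factorial_succ (2 * n + 1), factorial_succ n]
    push_cast
    field_simp
    ring

theorem eval_legendre (m : ℕ) (x : ℝ) :
    (legendre m).eval x
      = (2 ^ m * m ! : ℝ)⁻¹ * (derivative^[m] ((X ^ 2 - 1 : ℝ[X]) ^ m)).eval x := by
  rw [legendre, eval_mul, eval_C, one_div]

theorem natDegree_legendre_le (m : ℕ) : (legendre m).natDegree ≤ m :=
  (natDegree_C_mul_le _ _).trans <| (natDegree_iterate_derivative _ _).trans <| by
    rw [natDegree_X_sq_sub_one_pow]; omega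

theorem iterate_derivative_legendre (m : ℕ) :
    derivative^[m] (legendre m) = C ((2 ^ m * m ! : ℝ)⁻¹ * (2 * m)!) := by
  have top := iterate_derivative_natDegree ((X ^ 2 - 1 : ℝ[X]) ^ m)
  rw [natDegree_X_sq_sub_one_pow, (monic_X_sq_sub_one.pow m).leadingCoeff, mul_one] at top
  rw [legendre, iterate_derivative_C_mul, ← Function.iterate_add_apply, ← two_mul, top,
    ← C_mul, one_div]

theorem integral_eval_mul_legendre_eq_zero {u : ℝ[X]} {m : ℕ} (hu : u.natDegree < m) :
    ∫ x in (-1 : ℝ)..1, u.eval x * (legendre m).eval x = 0 := by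
  simp_rw [eval_legendre, mul_left_comm (u.eval _)]
  rw [integral_const_mul, integral_eval_mul_iterate_derivative_X_sq_sub_one_pow,
    iterate_derivative_eq_zero hu]
  simp

theorem integral_legendre_sq (m : ℕ) :
    ∫ x in (-1 : ℝ)..1, (legendre m).eval x ^ 2 = 2 / (2 * m + 1) := by
  simp_rw [sq]
  conv_lhs => enter [1, x, 2]; rw [eval_legendre]
  simp_rw [mul_left_comm ((legendre m).eval _)]
  rw [integral_const_mul, integral_eval_mul_iterate_derivative_X_sq_sub_one_pow,
    iterate_derivative_legendre]
  simp_rw [eval_C]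
  rw [integral_const_mul, integral_X_sq_sub_one_pow, factorial_succ]
  have sign : ((-1 : ℝ) ^ m) * (-1) ^ m = 1 := by rw [← mul_pow]; norm_num
  push_cast
  field_simp
  linear_combination (2 : ℝ) ^ (2 * m + 1) * sign

theorem natDegree_add_sum_C_mul_legendre_lt (u : ℝ[X]) (a : ℕ → ℝ) {k : ℕ → ℕ}
    (hk : StrictMono k) (hu : u.natDegree < k 0) (N : ℕ) :
    (u + ∑ n ∈ range N, C (a n) * legendre (k n)).natDegree < k N := by
  induction N with
  | zero => simpa using hu
  | succ N ih =>
    rw [sum_range_succ, ← add_assoc]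
    refine (natDegree_add_le _ _).trans_lt (max_lt (ih.trans (hk N.lt_succ_self)) ?_)
    exact ((natDegree_C_mul_le _ _).trans (natDegree_legendre_le _)).trans_lt
      (hk N.lt_succ_self)

theorem integral_sq_add_sum_legendre (u : ℝ[X]) (a : ℕ → ℝ) {k : ℕ → ℕ}
    (hk : StrictMono k) (hu : u.natDegree < k 0) (N : ℕ) :
    ∫ x in (-1 : ℝ)..1, (u.eval x + ∑ n ∈ range N, a n * (legendre (k n)).eval x) ^ 2
      = (∫ x in (-1 : ℝ)..1, u.eval x ^ 2)
        + ∑ n ∈ range N, a n ^ 2 * (2 / (2 * k n + 1)) := by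
  induction N with
  | zero => simp
  | succ N ih =>
    set F := u + ∑ n ∈ range N, C (a n) * legendre (k n)
    have eval_F :
        ∀ x, u.eval x + ∑ n ∈ range N, a n * (legendre (k n)).eval x = F.eval x := by
      intro x
      simp [F, eval_finsetSum]
    have expand : ∀ x, (u.eval x + ∑ n ∈ range (N + 1), a n * (legendre (k n)).eval x) ^ 2
        = F.eval x ^ 2 + (2 * a N * (F.eval x * (legendre (k N)).eval x)
          + a N ^ 2 * (legendre (k N)).eval x ^ 2) := by
      intro x
      rw [sum_range_succ, ← add_assoc, eval_F]
      ring
    simp only [eval_F] at ih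
    simp only [expand]
    rw [integral_add (Continuous.intervalIntegrable (by fun_prop) _ _)
        (Continuous.intervalIntegrable (by fun_prop) _ _),
      integral_add (Continuous.intervalIntegrable (by fun_prop) _ _)
        (Continuous.intervalIntegrable (by fun_prop) _ _),
      integral_const_mul, integral_const_mul,
      integral_eval_mul_legendre_eq_zero (natDegree_add_sum_C_mul_legendre_lt u a hk hu N),
      integral_legendre_sq, ih, sum_range_succ]
    ring

noncomputable def centralBinomDivFourPow (n : ℕ) : ℝ := n.centralBinom / 4 ^ n

theorem centralBinomDivFourPow_zero : centralBinomDivFourPow 0 = 1 := by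
  simp [centralBinomDivFourPow]

theorem centralBinomDivFourPow_succ (n : ℕ) :
    centralBinomDivFourPow (n + 1) = (2 * n + 1) / (2 * n + 2) * centralBinomDivFourPow n := by
  have h : ((n + 1 : ℕ) : ℝ) * (n + 1).centralBinom = 2 * (2 * n + 1) * n.centralBinom := by
    exact_mod_cast succ_mul_centralBinom_succ n
  rw [centralBinomDivFourPow, centralBinomDivFourPow, pow_succ]
  push_cast at h
  field_simp
  linear_combination 2 * h

theorem sq_centralBinomDivFourPow_le (n : ℕ) :
    centralBinomDivFourPow n ^ 2 ≤ 1 / (2 * n + 1) := by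
  induction n with
  | zero => simp [centralBinomDivFourPow_zero]
  | succ n ih =>
    rw [centralBinomDivFourPow_succ, mul_pow]
    calc ((2 * n + 1 : ℝ) / (2 * n + 2)) ^ 2 * centralBinomDivFourPow n ^ 2
        ≤ ((2 * n + 1 : ℝ) / (2 * n + 2)) ^ 2 * (1 / (2 * n + 1)) := by gcongr
      _ ≤ 1 / (2 * ((n + 1 : ℕ) : ℝ) + 1) := by
        rw [div_pow, _root_.div_mul_div_comm, div_le_div_iff₀ (by positivity) (by positivity)]
        push_cast
        nlinarith

theorem tendsto_sq_centralBinomDivFourPow :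
    Tendsto (fun n => centralBinomDivFourPow n ^ 2) atTop (nhds 0) :=
  squeeze_zero (fun n => sq_nonneg _)
    (fun n => (sq_centralBinomDivFourPow_le n).trans
      (one_div_le_one_div_of_le (by positivity) (by linarith [(n.cast_nonneg : (0 : ℝ) ≤ n)])))
    tendsto_one_div_add_atTop_nhds_zero_nat

/-- `P_{2n+1}` is the derivative of a multiple of `D^{2n} (X² - 1)^{2n+1}`, which vanishes at
`-1` and whose value at `0` is `(2n)!` times the coefficient of `X^{2n}` in `(X² - 1)^{2n+1}`. -/
theorem integral_neg_one_zero_legendre_odd (n : ℕ) :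
    ∫ x in (-1 : ℝ)..0, (legendre (2 * n + 1)).eval x
      = (-1) ^ (n + 1) * centralBinomDivFourPow n / (2 * (n + 1)) := by
  simp_rw [eval_legendre, Function.iterate_succ_apply']
  rw [integral_const_mul, integral_eval_derivative,
    eval_iterate_derivative_X_sq_sub_one_pow (e := -1) (by omega) (by norm_num), sub_zero,
    ← coeff_zero_eq_eval_zero, coeff_iterate_derivative, zero_add, descFactorial_self,
    coeff_X_sq_sub_one_pow, nsmul_eq_mul, show 2 * n + 1 - n = n + 1 by omega]
  have choose_succ : ((2 * n + 1).choose n : ℝ) * (n + 1) = n.centralBinom * (2 * n + 1) := by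
    have := choose_mul_succ_eq (2 * n) n
    rw [← centralBinom_eq_two_mul_choose, show 2 * n + 1 - n = n + 1 by omega] at this
    exact_mod_cast this.symm
  rw [centralBinomDivFourPow, factorial_succ, pow_succ, pow_mul,
    show (2 : ℝ) ^ 2 = 4 by norm_num]
  push_cast
  field_simp
  linear_combination choose_succ

theorem integral_sq_sub_of_step {g f : ℝ → ℝ} (hneg : ∀ x, x < 0 → g x = -1)
    (hpos : ∀ x, 0 < x → g x = 0) (hf : Continuous f) :
    ∫ x in (-1 : ℝ)..1, (g x - f x) ^ 2
      = 1 + 2 * (∫ x in (-1 : ℝ)..0, f x) + ∫ x in (-1 : ℝ)..1, f x ^ 2 := by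
  have left : Set.EqOn (fun x => 1 + 2 * f x + f x ^ 2) (fun x => (g x - f x) ^ 2)
      (Set.uIoo (-1) 0) := by
    intro x hx
    rw [Set.uIoo_of_le (by norm_num)] at hx
    simp only [hneg x hx.2]
    ring
  have right : Set.EqOn (fun x => f x ^ 2) (fun x => (g x - f x) ^ 2) (Set.uIoo 0 1) := by
    intro x hx
    rw [Set.uIoo_of_le zero_le_one] at hx
    simp only [hpos x hx.1]
    ring
  have hf2 : Continuous fun x => f x ^ 2 := by fun_prop
  rw [← integral_add_adjacent_intervals (b := 0)
      ((Continuous.intervalIntegrable (by fun_prop) _ _).congr_uIoo left)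
      ((hf2.intervalIntegrable _ _).congr_uIoo right),
    ← integral_congr_uIoo left, ← integral_congr_uIoo right,
    integral_add (Continuous.intervalIntegrable (by fun_prop) _ _) (hf2.intervalIntegrable _ _),
    integral_add intervalIntegrable_const (Continuous.intervalIntegrable (by fun_prop) _ _),
    integral_const_mul, ← integral_add_adjacent_intervals (hf2.intervalIntegrable (-1) 0)
      (hf2.intervalIntegrable 0 1)]
  simp only [integral_const, sub_neg_eq_add, zero_add, smul_eq_mul, mul_one]
  ring

noncomputable def stepCoeff (n : ℕ) : ℝ :=
  (-1) ^ n * (4 * n + 3) * (2 * n)! / (2 ^ (2 * n + 2) * (n + 1)! * n !)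

theorem stepCoeff_eq (n : ℕ) :
    stepCoeff n = (-1) ^ n * (4 * n + 3) * centralBinomDivFourPow n / (4 * (n + 1)) := by
  have h := choose_mul_factorial_mul_factorial (show n ≤ 2 * n by omega)
  rw [← centralBinom_eq_two_mul_choose, show 2 * n - n = n by omega] at h
  rw [stepCoeff, centralBinomDivFourPow, ← h, factorial_succ, pow_add, pow_mul]
  push_cast
  field_simp
  ring

theorem stepCoeff_mul_integral_legendre (n : ℕ) :
    stepCoeff n * ∫ x in (-1 : ℝ)..0, (legendre (2 * n + 1)).eval x
      = -(centralBinomDivFourPow n ^ 2 - centralBinomDivFourPow (n + 1) ^ 2) / 2 := by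
  rw [stepCoeff_eq, integral_neg_one_zero_legendre_odd, centralBinomDivFourPow_succ]
  have sign : ((-1 : ℝ) ^ n) * (-1) ^ n = 1 := by rw [← mul_pow]; norm_num
  field_simp
  linear_combination (-4 * (4 * n + 3) * centralBinomDivFourPow n ^ 2) * sign

theorem stepCoeff_sq_mul_norm_sq (n : ℕ) :
    stepCoeff n ^ 2 * (2 / (2 * (2 * n + 1 : ℕ) + 1))
      = (centralBinomDivFourPow n ^ 2 - centralBinomDivFourPow (n + 1) ^ 2) / 2 := by
  rw [stepCoeff_eq, centralBinomDivFourPow_succ]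
  have sign : ((-1 : ℝ) ^ n) ^ 2 = 1 := by rw [← pow_mul, pow_mul']; norm_num
  push_cast
  field_simp
  linear_combination 16 * (4 * n + 3) ^ 2 * centralBinomDivFourPow n ^ 2 * sign

theorem stepExpansion_eq (p : ℕ) (x : ℝ) :
    stepExpansion p x
      = -1 / 2 + ∑ n ∈ range (p + 1), stepCoeff n * (legendre (2 * n + 1)).eval x :=
  rfl

theorem integral_neg_one_zero_stepExpansion (p : ℕ) :
    ∫ x in (-1 : ℝ)..0, stepExpansion p x = -1 / 2 - ∑ n ∈ range (p + 1),
      (centralBinomDivFourPow n ^ 2 - centralBinomDivFourPow (n + 1) ^ 2) / 2 := by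
  simp_rw [stepExpansion_eq]
  rw [integral_add intervalIntegrable_const (Continuous.intervalIntegrable (by fun_prop) _ _),
    integral_finsetSum (fun n _ => Continuous.intervalIntegrable (by fun_prop) _ _)]
  simp_rw [integral_const_mul, stepCoeff_mul_integral_legendre]
  simp only [integral_const, sub_neg_eq_add, zero_add, one_smul, neg_div, sum_neg_distrib]
  ring

theorem integral_stepExpansion_sq (p : ℕ) :
    ∫ x in (-1 : ℝ)..1, stepExpansion p x ^ 2 = 1 / 2 + ∑ n ∈ range (p + 1),
      (centralBinomDivFourPow n ^ 2 - centralBinomDivFourPow (n + 1) ^ 2) / 2 := by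
  have h : ∀ x, stepExpansion p x = (C (-1 / 2 : ℝ)).eval x
      + ∑ n ∈ range (p + 1), stepCoeff n * (legendre (2 * n + 1)).eval x := by
    simp [stepExpansion_eq]
  simp_rw [h]
  rw [integral_sq_add_sum_legendre _ _ (k := fun n => 2 * n + 1)
    (fun m n hmn => by dsimp only; omega) (by simp)]
  simp_rw [stepCoeff_sq_mul_norm_sq]
  norm_num

theorem integral_sq_sub_stepExpansion {g : ℝ → ℝ} (hneg : ∀ x, x < 0 → g x = -1)
    (hpos : ∀ x, 0 < x → g x = 0) (p : ℕ) :
    ∫ x in (-1 : ℝ)..1, (g x - stepExpansion p x) ^ 2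
      = centralBinomDivFourPow (p + 1) ^ 2 / 2 := by
  rw [integral_sq_sub_of_step hneg hpos (by unfold stepExpansion; fun_prop),
    integral_neg_one_zero_stepExpansion, integral_stepExpansion_sq, ← sum_div,
    sum_range_sub' (fun n => centralBinomDivFourPow n ^ 2), centralBinomDivFourPow_zero]
  ring

/-- the truncated Legendre expansions of the step function
(`g = −1` on `[−1,0)`, `g = 0` on `(0,1]`, value at `0` irrelevant) converge
to it in `L²` on `[−1, 1]`. -/
theorem stepExpansion_tendsto_L2
    (g : ℝ → ℝ) (hneg : ∀ x, x < 0 → g x = -1) (hpos : ∀ x, 0 < x → g x = 0) :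
    Tendsto (fun p => ∫ x in (-1 : ℝ)..1, (g x - stepExpansion p x) ^ 2)
      atTop (nhds 0) := by
  simp_rw [integral_sq_sub_stepExpansion hneg hpos]
  simpa using (tendsto_sq_centralBinomDivFourPow.comp (tendsto_add_atTop_nat 1)).div_const 2
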